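/- arXiv:2309.09997 — 9 statements merged into one kernel-verified Lean document; each statement's English description precedes it below -/
import Mathlib

section
/- Memory Partition (Theorem 2 of the paper): Assume a buddy pool configuration (nmax, L, maxsz) and a bitmap bits satisfying inv_bitmap, inv_bitmap0 and inv_bitmapn. Then for every address addr with addr < nmax * maxsz there exists exactly one pair (i, j) of natural numbers such that i < L, j < nmax * 4^i, is_memblock (bits i j), and addr ∈ interval i j. -/
inductive BlockState : Type
  | ALLOCATED : BlockState
  | FREE : BlockState
  | DIVIDED : BlockState
  | NOEXIST : BlockState
  | FREEING : BlockState
  | ALLOCATING : BlockState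
  deriving DecidableEq

open BlockState

/-- A block state is a physical block state iff it is neither `DIVIDED` nor `NOEXIST`. -/
def is_memblock (b : BlockState) : Prop := b ≠ DIVIDED ∧ b ≠ NOEXIST

instance : DecidablePred is_memblock := fun b => by
  unfold is_memblock; infer_instance

/-- Address interval of block `j` at level `i` in a pool with level-0 block size `maxsz`. -/
def interval (maxsz i j : ℕ) : Set ℕ :=
  Set.Ico (j * (maxsz / 4 ^ i)) ((j + 1) * (maxsz / 4 ^ i))

/-- Well-shapedness of the forest of quad trees of bits. -/
def inv_bitmap (nmax L : ℕ) (bits : ℕ → ℕ → BlockState) : Prop :=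
  ∀ i < L, ∀ j < nmax * 4 ^ i,
    (is_memblock (bits i j) →
      (i > 0 → bits (i - 1) (j / 4) = DIVIDED) ∧
      (i + 1 < L → ∀ k < 4, bits (i + 1) (4 * j + k) = NOEXIST)) ∧
    (bits i j = DIVIDED → i > 0 → bits (i - 1) (j / 4) = DIVIDED) ∧
    (bits i j = NOEXIST →
      (i + 1 < L → ∀ k < 4, bits (i + 1) (4 * j + k) = NOEXIST) ∧
      (i > 0 → bits (i - 1) (j / 4) ≠ DIVIDED))

/-- The bits at level 0 are different from `NOEXIST`. -/
def inv_bitmap0 (nmax : ℕ) (bits : ℕ → ℕ → BlockState) : Prop :=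
  ∀ j < nmax, bits 0 j ≠ NOEXIST

/-- The bits at the lowest level are different from `DIVIDED`. -/
def inv_bitmapn (nmax L : ℕ) (bits : ℕ → ℕ → BlockState) : Prop :=
  ∀ j < nmax * 4 ^ (L - 1), bits (L - 1) j ≠ DIVIDED

/-- Memory Partition: every address of the pool lies in exactly one physical block. -/
theorem memory_partition (nmax L maxsz : ℕ)
    (hnmax : nmax > 0) (hL : L > 0) (hmaxsz : ∃ n > 0, maxsz = (4 * n) * 4 ^ L)
    (bits : ℕ → ℕ → BlockState)
    (h1 : inv_bitmap nmax L bits)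
    (h2 : inv_bitmap0 nmax bits)
    (h3 : inv_bitmapn nmax L bits) :
    ∀ addr < nmax * maxsz, ∃! p : ℕ × ℕ,
      p.1 < L ∧ p.2 < nmax * 4 ^ p.1 ∧ is_memblock (bits p.1 p.2) ∧
      addr ∈ interval maxsz p.1 p.2 := by
  classical
  obtain ⟨n, hn, hms⟩ := hmaxsz
  intro addr haddr
  set sz : ℕ → ℕ := fun i => maxsz / 4 ^ i with hsz
  have hszval : ∀ i ≤ L, sz i = 4 * n * 4 ^ (L - i) := by
    intro i hi
    have hp : (4:ℕ) ^ (L - i) * 4 ^ i = 4 ^ L := by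
      rw [← pow_add, Nat.sub_add_cancel hi]
    have hmseq : maxsz = 4 * n * 4 ^ (L - i) * 4 ^ i := by
      rw [hms, ← hp]; ring
    simp only [hsz]
    rw [hmseq, Nat.mul_div_cancel _ (by positivity : (0:ℕ) < 4 ^ i)]
  have hszpos : ∀ i ≤ L, 0 < sz i := by
    intro i hi; rw [hszval i hi]; positivity
  have hszsucc : ∀ i, i + 1 ≤ L → sz i = 4 * sz (i + 1) := by
    intro i hi
    rw [hszval i (by omega), hszval (i + 1) hi]
    have h : L - i = (L - (i + 1)) + 1 := by omega
    rw [h, pow_succ]; ring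
  have hmaxeq : ∀ i ≤ L, nmax * 4 ^ i * sz i = nmax * maxsz := by
    intro i hi
    have hp : (4:ℕ) ^ (L - i) * 4 ^ i = 4 ^ L := by
      rw [← pow_add, Nat.sub_add_cancel hi]
    have hmseq : maxsz = 4 * n * 4 ^ (L - i) * 4 ^ i := by
      rw [hms, ← hp]; ring
    rw [hszval i hi, hmseq]; ring
  set jf : ℕ → ℕ := fun i => addr / sz i with hjf
  have hjrange : ∀ i ≤ L, jf i < nmax * 4 ^ i := by
    intro i hi
    have := hszpos i hi
    rw [Nat.div_lt_iff_lt_mul this, hmaxeq i hi]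
    exact haddr
  have hjdiv : ∀ i, i + 1 ≤ L → jf (i + 1) / 4 = jf i := by
    intro i hi
    simp only [hjf]
    rw [Nat.div_div_eq_div_mul, mul_comm (sz (i + 1)) 4, ← hszsucc i hi]
  have hjmem : ∀ i ≤ L, addr ∈ interval maxsz i (jf i) := by
    intro i hi
    have hpos := hszpos i hi
    constructor
    · exact Nat.div_mul_le_self addr (sz i)
    · exact (Nat.div_lt_iff_lt_mul hpos).mp (Nat.lt_succ_self _)
  have hjuniq : ∀ i j, addr ∈ interval maxsz i j → j = jf i := by
    intro i j hin
    obtain ⟨hlo, hhi⟩ := hin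
    exact (Nat.div_eq_of_lt_le hlo hhi).symm
  -- children of memblock/NOEXIST nodes along the chain are NOEXIST
  have hchild : ∀ m, m + 1 < L →
      (is_memblock (bits m (jf m)) ∨ bits m (jf m) = NOEXIST) →
      bits (m + 1) (jf (m + 1)) = NOEXIST := by
    intro m hm hcase
    have hm' : m < L := by omega
    have h1m := h1 m hm' (jf m) (hjrange m hm'.le)
    have hk : jf (m + 1) = 4 * jf m + jf (m + 1) % 4 := by
      conv_lhs => rw [← Nat.div_add_mod (jf (m + 1)) 4]
      rw [hjdiv m (by omega)]
    have hmod : jf (m + 1) % 4 < 4 := Nat.mod_lt _ (by norm_num)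
    rcases hcase with h | h
    · rw [hk]; exact (h1m.1 h).2 hm _ hmod
    · rw [hk]; exact (h1m.2.2 h).1 hm _ hmod
  have hNE : ∀ i, i < L → is_memblock (bits i (jf i)) →
      ∀ m, i < m → m < L → bits m (jf m) = NOEXIST := by
    intro i hi hmem m
    induction m with
    | zero => omega
    | succ m ih =>
      intro him hmL
      rcases Nat.lt_or_ge i m with h | h
      · exact hchild m hmL (Or.inr (ih h (by omega)))
      · have he : i = m := by omega
        subst he
        exact hchild i hmL (Or.inl hmem)
  have hex : ∃ i, bits i (jf i) ≠ DIVIDED :=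
    ⟨L - 1, h3 _ (hjrange (L - 1) (by omega))⟩
  set i0 := Nat.find hex with hi0
  have hi0L : i0 < L := by
    have := Nat.find_min' hex (h3 _ (hjrange (L - 1) (by omega)))
    omega
  have hnd : bits i0 (jf i0) ≠ DIVIDED := Nat.find_spec hex
  have hmem0 : is_memblock (bits i0 (jf i0)) := by
    refine ⟨hnd, ?_⟩
    intro hne
    rcases Nat.eq_zero_or_pos i0 with h0 | hpos
    · have hr : jf 0 < nmax := by
        have := hjrange 0 (by omega)
        simpa using this
      rw [h0] at hne
      exact h2 _ hr hne
    · have hdm : bits (i0 - 1) (jf (i0 - 1)) = DIVIDED := by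
        by_contra hc
        exact absurd (Nat.find_min hex (show i0 - 1 < i0 by omega)) (by simp [hc])
      have hd4 : jf i0 / 4 = jf (i0 - 1) := by
        have he : i0 - 1 + 1 = i0 := by omega
        have := hjdiv (i0 - 1) (by omega)
        rw [he] at this
        exact this
      have := ((h1 i0 hi0L (jf i0) (hjrange i0 hi0L.le)).2.2 hne).2 hpos
      rw [hd4] at this
      exact this hdm
  refine ⟨(i0, jf i0), ⟨hi0L, hjrange i0 hi0L.le, hmem0, hjmem i0 hi0L.le⟩, ?_⟩
  rintro ⟨i, j⟩ ⟨hiL, hjr, hmem, hin⟩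
  have hj : j = jf i := hjuniq i j hin
  subst hj
  have hii : i = i0 := by
    rcases lt_trichotomy i i0 with h | h | h
    · exact absurd (hNE i hiL hmem i0 h hi0L) hmem0.2
    · exact h
    · exact absurd (hNE i0 hi0L hmem0 i h hiL) hmem.2
  subst hii
  rfl
end

section
/- Coverage (existence half of Memory Partition): Assume a buddy pool configuration (nmax, L, maxsz) and a bitmap bits satisfying inv_bitmap, inv_bitmap0 and inv_bitmapn. Then for every address addr with addr < nmax * maxsz there exists a pair (i, j) with i < L, j < nmax * 4^i, is_memblock (bits i j), and addr ∈ interval i j. -/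
open BlockState

/-- Coverage: every address of the pool lies in some physical block. -/
theorem memory_coverage (nmax L maxsz : ℕ)
    (hnmax : nmax > 0) (hL : L > 0) (hmaxsz : ∃ n > 0, maxsz = (4 * n) * 4 ^ L)
    (bits : ℕ → ℕ → BlockState)
    (h1 : inv_bitmap nmax L bits)
    (h2 : inv_bitmap0 nmax bits)
    (h3 : inv_bitmapn nmax L bits) :
    ∀ addr < nmax * maxsz, ∃ i j : ℕ,
      i < L ∧ j < nmax * 4 ^ i ∧ is_memblock (bits i j) ∧
      addr ∈ interval maxsz i j := by
  obtain ⟨n, hn, hmeq⟩ := hmaxsz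
  intro addr haddr
  have hdvd : ∀ i ≤ L, 4 ^ i ∣ maxsz := by
    intro i hi; rw [hmeq]; exact Dvd.dvd.mul_left (pow_dvd_pow 4 hi) _
  have hpos : ∀ i ≤ L, 0 < maxsz / 4 ^ i := by
    intro i hi
    apply Nat.div_pos _ (pow_pos (by norm_num) i)
    calc 4 ^ i ≤ 4 ^ L := Nat.pow_le_pow_right (by norm_num) hi
      _ ≤ (4 * n) * 4 ^ L := Nat.le_mul_of_pos_left _ (by positivity)
      _ = maxsz := hmeq.symm
  have hjlt : ∀ i, i < L → addr / (maxsz / 4 ^ i) < nmax * 4 ^ i := by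
    intro i hi
    rw [Nat.div_lt_iff_lt_mul (hpos i hi.le), mul_assoc,
      Nat.mul_div_cancel' (hdvd i hi.le)]
    exact haddr
  have hmem : ∀ i, i < L → addr ∈ interval maxsz i (addr / (maxsz / 4 ^ i)) := by
    intro i hi
    constructor
    · exact Nat.div_mul_le_self addr _
    · rw [add_mul, one_mul]
      have := Nat.mod_lt addr (hpos i hi.le)
      have := Nat.div_add_mod' addr (maxsz / 4 ^ i)
      omega
  have hstep : ∀ i, i + 1 ≤ L →
      (addr / (maxsz / 4 ^ (i + 1))) / 4 = addr / (maxsz / 4 ^ i) := by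
    intro i hi
    obtain ⟨m, hm'⟩ := hdvd (i + 1) hi
    have h4 : maxsz / 4 ^ i = 4 * m := by
      rw [hm', pow_succ, show 4 ^ i * 4 * m = 4 ^ i * (4 * m) by ring,
        Nat.mul_div_cancel_left _ (pow_pos (by norm_num : (0:ℕ) < 4) i)]
    have h5 : maxsz / 4 ^ (i + 1) = m := by
      rw [hm', Nat.mul_div_cancel_left _ (pow_pos (by norm_num : (0:ℕ) < 4) (i + 1))]
    rw [h4, h5, Nat.div_div_eq_div_mul, mul_comm m 4]
  have key : ∀ d i, i < L → L - 1 - i ≤ d →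
      bits i (addr / (maxsz / 4 ^ i)) ≠ NOEXIST →
      ∃ i' j : ℕ, i' < L ∧ j < nmax * 4 ^ i' ∧ is_memblock (bits i' j) ∧
        addr ∈ interval maxsz i' j := by
    intro d
    induction d with
    | zero =>
      intro i hi hle hne
      have : i = L - 1 := by omega
      subst this
      refine ⟨L - 1, _, hi, hjlt _ hi, ⟨h3 _ (hjlt _ hi), hne⟩, hmem _ hi⟩
    | succ d ih =>
      intro i hi hle hne
      by_cases hd : bits i (addr / (maxsz / 4 ^ i)) = DIVIDED
      · have hi1 : i + 1 < L := by
          by_contra h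
          have hieq : i = L - 1 := by omega
          subst hieq
          exact h3 _ (hjlt _ hi) hd
        apply ih (i + 1) hi1 (by omega)
        intro hnex
        have := (h1 (i + 1) hi1 _ (hjlt (i + 1) hi1)).2.2 hnex
        have hp := this.2 (by omega)
        rw [Nat.add_sub_cancel, hstep i hi] at hp
        exact hp hd
      · refine ⟨i, _, hi, hjlt i hi, ⟨hd, hne⟩, hmem i hi⟩
  apply key (L - 1) 0 hL (by omega)
  have : maxsz / 4 ^ 0 = maxsz := by simp
  rw [this]
  apply h2
  have := hjlt 0 hL
  simpa [this] using hjlt 0 hL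
end

section
/- Non-overlap of physical blocks (uniqueness half of Memory Partition): Assume a buddy pool configuration (nmax, L, maxsz) and a bitmap bits satisfying inv_bitmap, inv_bitmap0 and inv_bitmapn. If i < L, j < nmax * 4^i, i' < L, j' < nmax * 4^(i'), is_memblock (bits i j), is_memblock (bits i' j'), and (i, j) ≠ (i', j'), then the intervals interval i j and interval i' j' are disjoint. -/
open BlockState

lemma bb_child_bound {nmax i j : ℕ} (hi : 0 < i) (hj : j < nmax * 4 ^ i) :
    j / 4 < nmax * 4 ^ (i - 1) := by
  have h4 : nmax * 4 ^ i = nmax * 4 ^ (i - 1) * 4 := by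
    rw [mul_assoc, ← pow_succ]
    congr 2
    omega
  rw [Nat.div_lt_iff_lt_mul (by norm_num)]
  omega

lemma bb_div_step (nmax L : ℕ) (bits : ℕ → ℕ → BlockState)
    (h1 : inv_bitmap nmax L bits) :
    ∀ d i j, i < L → j < nmax * 4 ^ i → bits i j = BlockState.DIVIDED → d ≤ i →
      bits (i - d) (j / 4 ^ d) = BlockState.DIVIDED := by
  intro d
  induction d with
  | zero => intro i j _ _ hD _; simpa using hD
  | succ d ih =>
    intro i j hiL hj hD hd
    have hi0 : 0 < i := by omega
    have hpar : bits (i - 1) (j / 4) = BlockState.DIVIDED :=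
      ((h1 i hiL j hj).2.1) hD hi0
    have := ih (i - 1) (j / 4) (by omega) (bb_child_bound hi0 hj) hpar (by omega)
    have e1 : i - 1 - d = i - (d + 1) := by omega
    have e2 : j / 4 / 4 ^ d = j / 4 ^ (d + 1) := by
      rw [Nat.div_div_eq_div_mul, ← pow_succ']
    rwa [e1, e2] at this

lemma bb_anc (nmax L : ℕ) (bits : ℕ → ℕ → BlockState)
    (h1 : inv_bitmap nmax L bits) (d i j : ℕ)
    (hiL : i < L) (hj : j < nmax * 4 ^ i) (hmb : is_memblock (bits i j))
    (hd0 : 0 < d) (hd : d ≤ i) :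
    bits (i - d) (j / 4 ^ d) = BlockState.DIVIDED := by
  have hi0 : 0 < i := by omega
  have hpar : bits (i - 1) (j / 4) = BlockState.DIVIDED :=
    ((h1 i hiL j hj).1 hmb).1 hi0
  have := bb_div_step nmax L bits h1 (d - 1) (i - 1) (j / 4) (by omega)
    (bb_child_bound hi0 hj) hpar (by omega)
  have e1 : i - 1 - (d - 1) = i - d := by omega
  have e2 : j / 4 / 4 ^ (d - 1) = j / 4 ^ d := by
    rw [Nat.div_div_eq_div_mul, ← pow_succ', show d - 1 + 1 = d from by omega]
  rwa [e1, e2] at this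

lemma bb_same_level {s j j' x : ℕ} (hs : 0 < s)
    (h : x ∈ Set.Ico (j * s) ((j + 1) * s))
    (h' : x ∈ Set.Ico (j' * s) ((j' + 1) * s)) : j = j' := by
  obtain ⟨a, b⟩ := h
  obtain ⟨c, d⟩ := h'
  have e1 : x / s = j := Nat.div_eq_of_lt_le a b
  have e2 : x / s = j' := Nat.div_eq_of_lt_le c d
  omega

/-- Non-overlap: distinct physical blocks occupy disjoint address intervals. -/
theorem memory_nonoverlap (nmax L maxsz : ℕ)
    (hnmax : nmax > 0) (hL : L > 0) (hmaxsz : ∃ n > 0, maxsz = (4 * n) * 4 ^ L)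
    (bits : ℕ → ℕ → BlockState)
    (h1 : inv_bitmap nmax L bits)
    (h2 : inv_bitmap0 nmax bits)
    (h3 : inv_bitmapn nmax L bits)
    (i j i' j' : ℕ)
    (hi : i < L) (hj : j < nmax * 4 ^ i)
    (hi' : i' < L) (hj' : j' < nmax * 4 ^ i')
    (hm : is_memblock (bits i j)) (hm' : is_memblock (bits i' j'))
    (hne : (i, j) ≠ (i', j')) :
    Disjoint (interval maxsz i j) (interval maxsz i' j') := by
  obtain ⟨n, hn, hmz⟩ := hmaxsz
  have hsz : ∀ k ≤ L, maxsz / 4 ^ k = 4 * n * 4 ^ (L - k) := by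
    intro k hkL
    have e : 4 * n * 4 ^ L = 4 * n * 4 ^ (L - k) * 4 ^ k := by
      calc 4 * n * 4 ^ L = 4 * n * (4 ^ (L - k) * 4 ^ k) := by
            rw [← pow_add, show L - k + k = L from by omega]
        _ = 4 * n * 4 ^ (L - k) * 4 ^ k := by ring
    rw [hmz, e]
    exact Nat.mul_div_cancel _ (by positivity)
  have hpos : ∀ k ≤ L, 0 < maxsz / 4 ^ k := by
    intro k hk
    rw [hsz k hk]
    positivity
  have key : ∀ a b a' b' x, a < a' → a' < L → b < nmax * 4 ^ a → b' < nmax * 4 ^ a' →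
      is_memblock (bits a b) → is_memblock (bits a' b') →
      x ∈ interval maxsz a b → x ∈ interval maxsz a' b' → False := by
    intro a b a' b' x haa ha'L hb hb' hmb hmb' hx hx'
    set d := a' - a with hd
    have hd0 : 0 < d := by omega
    have hrel : maxsz / 4 ^ a = 4 ^ d * (maxsz / 4 ^ a') := by
      rw [hsz a (by omega), hsz a' (by omega), show 4 * n * 4 ^ (L - a)
        = 4 ^ d * (4 * n * 4 ^ (L - a')) by
          rw [show 4 ^ d * (4 * n * 4 ^ (L - a')) = 4 * n * (4 ^ d * 4 ^ (L - a')) by ring,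
            ← pow_add]
          congr 2
          omega]
    have hxA : x ∈ interval maxsz a (b' / 4 ^ d) := by
      obtain ⟨l, u⟩ := hx'
      constructor
      · calc (b' / 4 ^ d) * (maxsz / 4 ^ a)
            = (b' / 4 ^ d) * 4 ^ d * (maxsz / 4 ^ a') := by rw [hrel]; ring
          _ ≤ b' * (maxsz / 4 ^ a') := Nat.mul_le_mul_right _ (Nat.div_mul_le_self _ _)
          _ ≤ x := l
      · have hlt : b' + 1 ≤ (b' / 4 ^ d + 1) * 4 ^ d := by
          have h1' := Nat.div_add_mod b' (4 ^ d)
          have h2' : b' % 4 ^ d < 4 ^ d := Nat.mod_lt _ (by positivity)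
          have : (b' / 4 ^ d + 1) * 4 ^ d = 4 ^ d * (b' / 4 ^ d) + 4 ^ d := by ring
          omega
        calc x < (b' + 1) * (maxsz / 4 ^ a') := u
          _ ≤ (b' / 4 ^ d + 1) * 4 ^ d * (maxsz / 4 ^ a') := Nat.mul_le_mul_right _ hlt
          _ = (b' / 4 ^ d + 1) * (maxsz / 4 ^ a) := by rw [hrel]; ring
    have hjq : b = b' / 4 ^ d := bb_same_level (hpos a (by omega)) hx hxA
    have hdiv := bb_anc nmax L bits h1 d a' b' ha'L hb' hmb' hd0 (by omega)
    have e : a' - d = a := by omega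
    rw [e, ← hjq] at hdiv
    exact hmb.1 hdiv
  rcases lt_trichotomy i i' with h | h | h
  · rw [Set.disjoint_left]
    intro x hx hx'
    exact key i j i' j' x h hi' hj hj' hm hm' hx hx'
  · subst h
    have hjne : j ≠ j' := fun he => hne (by rw [he])
    rw [Set.disjoint_left]
    intro x hx hx'
    exact hjne (bb_same_level (hpos i hi.le) hx hx')
  · rw [Set.disjoint_left]
    intro x hx hx'
    exact key i' j' i j x h hi hj' hj hm' hm hx' hx
end

section
/- Path lemma for well-shaped bitmaps: Let L > 0 and let f : ℕ → BlockState (the sequence of block states along a fixed root-to-leaf path of a quad tree) satisfy: f 0 ≠ NOEXIST; f (L-1) ≠ DIVIDED; for all i with i+1 < L: if is_memblock (f i) then f (i+1) = NOEXIST, and if f i = NOEXIST then f (i+1) = NOEXIST; for all i with 0 < i and i < L: if is_memblock (f i) then f (i-1) = DIVIDED, if f i = DIVIDED then f (i-1) = DIVIDED, and if f i = NOEXIST then f (i-1) ≠ DIVIDED. Then there exists exactly one i < L with is_memblock (f i). -/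
open BlockState

/-- Path lemma: along a root-to-leaf path of a well-shaped quad tree there is
exactly one physical block. -/
theorem path_unique_memblock (L : ℕ) (hL : L > 0) (f : ℕ → BlockState)
    (h0 : f 0 ≠ NOEXIST)
    (hn : f (L - 1) ≠ DIVIDED)
    (hdown : ∀ i, i + 1 < L →
      (is_memblock (f i) → f (i + 1) = NOEXIST) ∧
      (f i = NOEXIST → f (i + 1) = NOEXIST))
    (hup : ∀ i, 0 < i → i < L →
      (is_memblock (f i) → f (i - 1) = DIVIDED) ∧
      (f i = DIVIDED → f (i - 1) = DIVIDED) ∧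
      (f i = NOEXIST → f (i - 1) ≠ DIVIDED)) :
    ∃! i : ℕ, i < L ∧ is_memblock (f i) := by
  classical
  -- After a memblock, everything below is NOEXIST
  have hafter : ∀ a, a < L → is_memblock (f a) → ∀ m, a < m → m < L → f m = NOEXIST := by
    intro a _ hmem m ham hmL
    induction m with
    | zero => omega
    | succ k ih =>
      rcases Nat.lt_or_ge a k with hak | hak
      · exact (hdown k hmL).2 (ih hak (by omega))
      · have : a = k := by omega
        subst this
        exact (hdown a hmL).1 hmem
  -- existence via least index with f i ≠ DIVIDED
  have hex : ∃ i, f i ≠ DIVIDED := ⟨L - 1, hn⟩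
  set i₀ := Nat.find hex with hi₀
  have hi₀L : i₀ < L := by
    have : i₀ ≤ L - 1 := Nat.find_le hn
    omega
  have hnd : f i₀ ≠ DIVIDED := Nat.find_spec hex
  have hne : f i₀ ≠ NOEXIST := by
    intro hno
    rcases Nat.eq_zero_or_pos i₀ with h | h
    · exact h0 (h ▸ hno)
    · have hmin : f (i₀ - 1) = DIVIDED := by
        have := Nat.find_min hex (m := i₀ - 1) (by omega)
        simpa using this
      exact (hup i₀ h hi₀L).2.2 hno hmin
  refine ⟨i₀, ⟨hi₀L, hnd, hne⟩, ?_⟩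
  intro y ⟨hyL, hymem⟩
  by_contra hne'
  rcases Nat.lt_or_ge y i₀ with h | h
  · exact hnd.elim (by
      have := hafter y hyL hymem i₀ h hi₀L
      exact absurd this hne)
  · have hlt : i₀ < y := by omega
    exact hymem.2 (hafter i₀ hi₀L ⟨hnd, hne⟩ y hlt hyL)
end

section
/- Ancestors of a physical block are DIVIDED: Assume a buddy pool configuration (nmax, L, maxsz) and a bitmap bits satisfying inv_bitmap. If i < L, j < nmax * 4^i, and is_memblock (bits i j), then for every i' < i we have j / 4^(i-i') < nmax * 4^(i') and bits i' (j / 4^(i-i')) = DIVIDED. -/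
open BlockState

/-- Ancestors of a physical block are DIVIDED. -/
theorem ancestors_divided (nmax L maxsz : ℕ)
    (hnmax : nmax > 0) (hL : L > 0) (hmaxsz : ∃ n > 0, maxsz = (4 * n) * 4 ^ L)
    (bits : ℕ → ℕ → BlockState)
    (h1 : inv_bitmap nmax L bits)
    (i j : ℕ) (hi : i < L) (hj : j < nmax * 4 ^ i)
    (hm : is_memblock (bits i j)) :
    ∀ i' < i, j / 4 ^ (i - i') < nmax * 4 ^ i' ∧
      bits i' (j / 4 ^ (i - i')) = DIVIDED := by
  have key : ∀ d, 0 < d → d ≤ i →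
      j / 4 ^ d < nmax * 4 ^ (i - d) ∧ bits (i - d) (j / 4 ^ d) = DIVIDED := by
    intro d
    induction d with
    | zero => intro h; omega
    | succ d ih =>
      intro _ hdi
      rcases Nat.eq_zero_or_pos d with rfl | hd
      · -- d+1 = 1
        have hipos : 0 < i := by omega
        have := ((h1 i hi j hj).1 hm).1 hipos
        constructor
        · have : j < (nmax * 4 ^ (i - 1)) * 4 := by
            have : 4 ^ i = 4 ^ (i - 1) * 4 := by
              rw [← pow_succ]; congr 1; omega
            rw [this, ← mul_assoc] at hj; exact hj
          simpa [pow_one] using Nat.div_lt_of_lt_mul (by linarith [this])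
        · simpa [pow_one] using this
      · obtain ⟨hb, hdiv⟩ := ih hd (by omega)
        have hlev : i - d < L := by omega
        have hpos : 0 < i - d := by omega
        have := ((h1 (i - d) hlev (j / 4 ^ d) hb).2.1) hdiv hpos
        have heq : j / 4 ^ d / 4 = j / 4 ^ (d + 1) := by
          rw [Nat.div_div_eq_div_mul, ← pow_succ]
        have hie : i - d - 1 = i - (d + 1) := by omega
        constructor
        · rw [← heq, ← hie]
          have : j / 4 ^ d < (nmax * 4 ^ (i - d - 1)) * 4 := by
            have h4 : 4 ^ (i - d) = 4 ^ (i - d - 1) * 4 := by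
              rw [← pow_succ]; congr 1; omega
            rw [h4, ← mul_assoc] at hb; exact hb
          exact Nat.div_lt_of_lt_mul (by linarith [this])
        · rw [← heq, ← hie]; exact this
  intro i' hi'
  have := key (i - i') (by omega) (by omega)
  have he : i - (i - i') = i' := by omega
  rw [he] at this
  exact this
end

section
/- The subtree strictly below a physical or nonexistent block is NOEXIST: Assume a buddy pool configuration (nmax, L, maxsz) and a bitmap bits satisfying inv_bitmap. If i < L, j < nmax * 4^i, and either is_memblock (bits i j) or bits i j = NOEXIST, then for every k ≥ 1 with i + k < L and every j' with j * 4^k ≤ j' < (j+1) * 4^k, we have bits (i+k) j' = NOEXIST. -/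
open BlockState

/-- The subtree strictly below a physical or nonexistent block is NOEXIST. -/
theorem subtree_noexist (nmax L maxsz : ℕ)
    (hnmax : nmax > 0) (hL : L > 0) (hmaxsz : ∃ n > 0, maxsz = (4 * n) * 4 ^ L)
    (bits : ℕ → ℕ → BlockState)
    (h1 : inv_bitmap nmax L bits)
    (i j : ℕ) (hi : i < L) (hj : j < nmax * 4 ^ i)
    (hm : is_memblock (bits i j) ∨ bits i j = NOEXIST) :
    ∀ k, 1 ≤ k → i + k < L →
      ∀ j', j * 4 ^ k ≤ j' → j' < (j + 1) * 4 ^ k →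
        bits (i + k) j' = NOEXIST := by
  intro k hk
  induction k with
  | zero => omega
  | succ k ih =>
    intro hik j' hlo hhi
    rcases Nat.lt_or_ge k 1 with hk1 | hk1
    · -- k = 0, so we are at the direct children
      interval_cases k
      norm_num at hlo hhi
      have hc : i + 1 < L → ∀ m < 4, bits (i + 1) (4 * j + m) = NOEXIST := by
        rcases hm with hm | hm
        · exact ((h1 i hi j hj).1 hm).2
        · exact ((h1 i hi j hj).2.2 hm).1
      have := hc hik (j' - 4 * j) (by omega)
      have hj' : 4 * j + (j' - 4 * j) = j' := by omega
      rwa [hj'] at this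
    · -- k ≥ 1: parent j'/4 is NOEXIST by IH
      have hlo' : j * 4 ^ k ≤ j' / 4 := by
        rw [Nat.le_div_iff_mul_le (by norm_num)]
        calc j * 4 ^ k * 4 = j * 4 ^ (k + 1) := by ring
        _ ≤ j' := hlo
      have hhi' : j' / 4 < (j + 1) * 4 ^ k := by
        rw [Nat.div_lt_iff_lt_mul (by norm_num)]
        calc j' < (j + 1) * 4 ^ (k + 1) := hhi
        _ = (j + 1) * 4 ^ k * 4 := by ring
      have hp : bits (i + k) (j' / 4) = NOEXIST :=
        ih hk1 (by omega) (j' / 4) hlo' hhi'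
      have hjb : j' / 4 < nmax * 4 ^ (i + k) := by
        calc j' / 4 < (j + 1) * 4 ^ k := hhi'
        _ ≤ nmax * 4 ^ i * 4 ^ k := by
              have h2 : j + 1 ≤ nmax * 4 ^ i := hj
              exact Nat.mul_le_mul_right _ h2
        _ = nmax * 4 ^ (i + k) := by rw [pow_add]; ring
      have hc := ((h1 (i + k) (by omega) (j' / 4) hjb).2.2 hp).1
        (by omega) (j' % 4) (Nat.mod_lt _ (by norm_num))
      have hj' : 4 * (j' / 4) + j' % 4 = j' := by omega
      rw [hj'] at hc
      have : i + (k + 1) = i + k + 1 := by ring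
      rwa [this]
end

section
/- Unique physical level on each address path: Assume a buddy pool configuration (nmax, L, maxsz) and a bitmap bits satisfying inv_bitmap, inv_bitmap0 and inv_bitmapn. Then for every address addr with addr < nmax * maxsz there exists exactly one i < L such that is_memblock (bits i (addr / (maxsz / 4^i))). -/
open BlockState

/-- Unique physical level on each address path. -/
theorem unique_physical_level (nmax L maxsz : ℕ)
    (hnmax : nmax > 0) (hL : L > 0) (hmaxsz : ∃ n > 0, maxsz = (4 * n) * 4 ^ L)
    (bits : ℕ → ℕ → BlockState)
    (h1 : inv_bitmap nmax L bits)
    (h2 : inv_bitmap0 nmax bits)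
    (h3 : inv_bitmapn nmax L bits) :
    ∀ addr < nmax * maxsz,
      ∃! i : ℕ, i < L ∧ is_memblock (bits i (addr / (maxsz / 4 ^ i))) := by
  classical
  obtain ⟨n, hn, hm⟩ := hmaxsz
  intro addr haddr
  have hdiv : ∀ i ≤ L, maxsz = (4 * n * 4 ^ (L - i)) * 4 ^ i := by
    intro i hi
    have h : L - i + i = L := Nat.sub_add_cancel hi
    calc maxsz = 4 * n * 4 ^ (L - i + i) := by rw [hm, h]
      _ = (4 * n * 4 ^ (L - i)) * 4 ^ i := by rw [pow_add]; ring
  have hq : ∀ i ≤ L, maxsz / 4 ^ i = 4 * n * 4 ^ (L - i) := by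
    intro i hi
    rw [hdiv i hi]
    exact Nat.mul_div_cancel _ (pow_pos (by norm_num) i)
  have hpos : ∀ i ≤ L, 0 < maxsz / 4 ^ i := by
    intro i hi; rw [hq i hi]; positivity
  have hstep : ∀ i, i + 1 ≤ L → maxsz / 4 ^ i = maxsz / 4 ^ (i + 1) * 4 := by
    intro i h
    rw [hq i (by omega), hq (i + 1) h, show L - i = (L - (i + 1)) + 1 by omega]
    ring
  have hj : ∀ i, i + 1 ≤ L →
      addr / (maxsz / 4 ^ (i + 1)) / 4 = addr / (maxsz / 4 ^ i) := by
    intro i h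
    rw [Nat.div_div_eq_div_mul, ← hstep i h]
  have hlt : ∀ i ≤ L, addr / (maxsz / 4 ^ i) < nmax * 4 ^ i := by
    intro i hi
    rw [Nat.div_lt_iff_lt_mul (hpos i hi), hq i hi]
    have := haddr
    rw [hdiv i hi] at this
    calc addr < nmax * ((4 * n * 4 ^ (L - i)) * 4 ^ i) := this
      _ = nmax * 4 ^ i * (4 * n * 4 ^ (L - i)) := by ring
  have hdec : ∀ i, i + 1 ≤ L → ∃ k < 4,
      addr / (maxsz / 4 ^ (i + 1)) = 4 * (addr / (maxsz / 4 ^ i)) + k := by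
    intro i h
    refine ⟨(addr / (maxsz / 4 ^ (i + 1))) % 4, Nat.mod_lt _ (by norm_num), ?_⟩
    rw [← hj i h]
    omega
  -- downward propagation of NOEXIST under a memblock
  have hdown : ∀ d i, i + 1 + d < L →
      is_memblock (bits i (addr / (maxsz / 4 ^ i))) →
      bits (i + 1 + d) (addr / (maxsz / 4 ^ (i + 1 + d))) = NOEXIST := by
    intro d
    induction d with
    | zero =>
      intro i hiL hmem
      obtain ⟨k, hk, hkeq⟩ := hdec i (by omega)
      have h := ((h1 i (by omega) _ (hlt i (by omega))).1 hmem).2 (by omega) k hk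
      simpa [hkeq] using h
    | succ d ih =>
      intro i hiL hmem
      have hne := ih i (by omega) hmem
      obtain ⟨k, hk, hkeq⟩ := hdec (i + 1 + d) (by omega)
      have h := (((h1 (i + 1 + d) (by omega) _ (hlt (i + 1 + d) (by omega))).2.2 hne).1
        (by omega) k hk)
      have he : i + 1 + (d + 1) = (i + 1 + d) + 1 := by omega
      rw [he, hkeq]
      exact h
  -- existence: least level that is not DIVIDED
  have hPn : bits (L - 1) (addr / (maxsz / 4 ^ (L - 1))) ≠ DIVIDED :=
    h3 _ (hlt (L - 1) (by omega))
  have hex : ∃ i, bits i (addr / (maxsz / 4 ^ i)) ≠ DIVIDED := ⟨L - 1, hPn⟩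
  set i0 := Nat.find hex with hi0def
  have hi0L : i0 < L := lt_of_le_of_lt (Nat.find_min' hex hPn) (by omega)
  have hi0D : bits i0 (addr / (maxsz / 4 ^ i0)) ≠ DIVIDED := Nat.find_spec hex
  have hi0N : bits i0 (addr / (maxsz / 4 ^ i0)) ≠ NOEXIST := by
    rcases Nat.eq_zero_or_pos i0 with h0 | h0
    · rw [h0]
      have := hlt 0 (by omega)
      simp only [pow_zero, mul_one] at this
      exact h2 _ this
    · have hpar : bits (i0 - 1) (addr / (maxsz / 4 ^ (i0 - 1))) = DIVIDED := by
        have := Nat.find_min hex (show i0 - 1 < i0 by omega)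
        simpa using this
      intro hne
      have h := ((h1 i0 hi0L _ (hlt i0 (by omega))).2.2 hne).2 h0
      have hjj : addr / (maxsz / 4 ^ i0) / 4 = addr / (maxsz / 4 ^ (i0 - 1)) := by
        have := hj (i0 - 1) (by omega)
        rwa [show i0 - 1 + 1 = i0 by omega] at this
      rw [hjj] at h
      exact h hpar
  have hmem0 : is_memblock (bits i0 (addr / (maxsz / 4 ^ i0))) := ⟨hi0D, hi0N⟩
  refine ⟨i0, ⟨hi0L, hmem0⟩, ?_⟩
  rintro i' ⟨hi'L, hmem'⟩
  rcases lt_trichotomy i' i0 with h | h | h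
  · exfalso
    have := hdown (i0 - i' - 1) i' (by omega) hmem'
    rw [show i' + 1 + (i0 - i' - 1) = i0 by omega] at this
    exact hi0N this
  · exact h
  · exfalso
    have := hdown (i' - i0 - 1) i0 (by omega) hmem0
    rw [show i0 + 1 + (i' - i0 - 1) = i' by omega] at this
    exact hmem'.2 this
end

section
/- No ancestor-descendant relation between distinct physical blocks: Assume a buddy pool configuration (nmax, L, maxsz) and a bitmap bits satisfying inv_bitmap. If i < i' < L, j < nmax * 4^i, j' < nmax * 4^(i'), is_memblock (bits i j), and is_memblock (bits i' j'), then j' / 4^(i'-i) ≠ j (the level-i ancestor of block j' is not block j). -/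
open BlockState

lemma anc_divided (nmax L : ℕ) (bits : ℕ → ℕ → BlockState)
    (h1 : inv_bitmap nmax L bits)
    (i' j' : ℕ) (hi' : i' < L) (hj' : j' < nmax * 4 ^ i')
    (hm' : is_memblock (bits i' j')) :
    ∀ d, 1 ≤ d → d ≤ i' → bits (i' - d) (j' / 4 ^ d) = BlockState.DIVIDED := by
  intro d
  induction d with
  | zero => omega
  | succ d ih =>
    intro _ hd
    rcases Nat.eq_zero_or_pos d with rfl | hd1
    · have := ((h1 i' hi' j' hj').1 hm').1 (by omega)
      simpa using this
    · have hdd : bits (i' - d) (j' / 4 ^ d) = BlockState.DIVIDED := ih (by omega) (by omega)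
      have hb : j' / 4 ^ d < nmax * 4 ^ (i' - d) := by
        rw [Nat.div_lt_iff_lt_mul (by positivity)]
        calc j' < nmax * 4 ^ i' := hj'
        _ = nmax * 4 ^ (i' - d) * 4 ^ d := by
            rw [mul_assoc, ← pow_add]; congr 2; omega
      have := (h1 (i' - d) (by omega) _ hb).2.1 hdd (by omega)
      have e1 : i' - d - 1 = i' - (d + 1) := by omega
      have e2 : j' / 4 ^ d / 4 = j' / 4 ^ (d + 1) := by
        rw [Nat.div_div_eq_div_mul, pow_succ]
      rw [e1, e2] at this
      exact this

/-- No ancestor-descendant relation between distinct physical blocks. -/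
theorem no_ancestor_descendant (nmax L maxsz : ℕ)
    (hnmax : nmax > 0) (hL : L > 0) (hmaxsz : ∃ n > 0, maxsz = (4 * n) * 4 ^ L)
    (bits : ℕ → ℕ → BlockState)
    (h1 : inv_bitmap nmax L bits)
    (i i' j j' : ℕ) (hii' : i < i') (hi' : i' < L)
    (hj : j < nmax * 4 ^ i) (hj' : j' < nmax * 4 ^ i')
    (hm : is_memblock (bits i j)) (hm' : is_memblock (bits i' j')) :
    j' / 4 ^ (i' - i) ≠ j := by
  intro heq
  have h := anc_divided nmax L bits h1 i' j' hi' hj' hm' (i' - i) (by omega) (by omega)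
  rw [heq] at h
  have e : i' - (i' - i) = i := by omega
  rw [e] at h
  exact hm.1 h
end

section
/- No memory leaks: the sizes of the physical blocks sum to the size of the pool. Assume a buddy pool configuration (nmax, L, maxsz) and a bitmap bits satisfying inv_bitmap, inv_bitmap0 and inv_bitmapn. Then ∑_{i ∈ Finset.range L} (card of {j ∈ Finset.range (nmax * 4^i) : is_memblock (bits i j)}) * (maxsz / 4^i) = nmax * maxsz. -/
open BlockState

lemma quad_count (m : ℕ) (P : ℕ → Prop) [DecidablePred P] :
    ((Finset.range (4*m)).filter (fun j => P (j/4))).card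
      = 4 * ((Finset.range m).filter P).card := by
  induction m with
  | zero => simp
  | succ m ih =>
    have h4 : 4*(m+1) = (4*m + 1 + 1 + 1) + 1 := by ring
    have d0 : (4*m)/4 = m := by omega
    have d1 : (4*m+1)/4 = m := by omega
    have d2 : (4*m+1+1)/4 = m := by omega
    have d3 : (4*m+1+1+1)/4 = m := by omega
    rw [h4, Finset.range_add_one, Finset.range_add_one, Finset.range_add_one, Finset.range_add_one,
      Finset.filter_insert, Finset.filter_insert, Finset.filter_insert, Finset.filter_insert,
      Finset.range_add_one, Finset.filter_insert]
    simp only [d0, d1, d2, d3]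
    by_cases hp : P m
    · simp [hp, ih]
      omega
    · simp [hp, ih]

lemma block_partition (n : ℕ) (f : ℕ → BlockState) :
    ((Finset.range n).filter (fun j => is_memblock (f j))).card
      + ((Finset.range n).filter (fun j => f j = DIVIDED)).card
      + ((Finset.range n).filter (fun j => f j = NOEXIST)).card = n := by
  have key : ∀ b : BlockState,
      (if is_memblock b then 1 else 0) + (if b = DIVIDED then 1 else 0)
        + (if b = NOEXIST then 1 else 0) = 1 := by
    intro b; cases b <;> simp [is_memblock]
  simp only [Finset.card_filter]
  rw [← Finset.sum_add_distrib, ← Finset.sum_add_distrib]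
  simp [key]

/-- No memory leaks: the sizes of the physical blocks sum to the size of the pool. -/
theorem no_memory_leak (nmax L maxsz : ℕ)
    (hnmax : nmax > 0) (hL : L > 0) (hmaxsz : ∃ n > 0, maxsz = (4 * n) * 4 ^ L)
    (bits : ℕ → ℕ → BlockState)
    (h1 : inv_bitmap nmax L bits)
    (h2 : inv_bitmap0 nmax bits)
    (h3 : inv_bitmapn nmax L bits) :
    ∑ i ∈ Finset.range L,
        ((Finset.range (nmax * 4 ^ i)).filter (fun j => is_memblock (bits i j))).card
          * (maxsz / 4 ^ i)
      = nmax * maxsz := by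
  obtain ⟨n, hn, hm⟩ := hmaxsz
  set M : ℕ → ℕ := fun i =>
    ((Finset.range (nmax * 4 ^ i)).filter (fun j => is_memblock (bits i j))).card with hM
  set D : ℕ → ℕ := fun i =>
    ((Finset.range (nmax * 4 ^ i)).filter (fun j => bits i j = DIVIDED)).card with hD
  set s : ℕ → ℕ := fun i => maxsz / 4 ^ i with hs
  have hsval : ∀ i ≤ L, s i = 4 * n * 4 ^ (L - i) := by
    intro i hi
    have hp : (4:ℕ) ^ L = 4 ^ (L - i) * 4 ^ i := by
      rw [← pow_add]; congr 1; omega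
    have hmx : maxsz = (4 * n * 4 ^ (L - i)) * 4 ^ i := by
      rw [hm, hp]; ring
    simp only [hs]
    rw [hmx, Nat.mul_div_cancel _ (by positivity)]
  have hstep : ∀ i, i + 1 ≤ L → s i = 4 * s (i + 1) := by
    intro i hi
    rw [hsval i (by omega), hsval (i+1) hi]
    have h5 : L - i = (L - (i+1)) + 1 := by omega
    rw [h5, pow_succ]
    ring
  have key : ∀ t, t < L →
      (∑ i ∈ Finset.range (t+1), M i * s i) + D t * s t = nmax * maxsz := by
    intro t ht
    induction t with
    | zero =>
      have hpart := block_partition (nmax * 4 ^ 0) (bits 0)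
      have hN : ((Finset.range (nmax * 4 ^ 0)).filter
          (fun j => bits 0 j = NOEXIST)).card = 0 := by
        rw [Finset.card_eq_zero, Finset.filter_eq_empty_iff]
        intro j hj
        simp only [Finset.mem_range, pow_zero, mul_one] at hj
        exact h2 j hj
      have hmd : M 0 + D 0 = nmax * 4 ^ 0 := by
        simp only [hM, hD]
        omega
      have hs0 : s 0 = maxsz := by simp [hs]
      rw [show Finset.range (0+1) = Finset.range 1 from rfl, Finset.sum_range_one, hs0]
      calc M 0 * maxsz + D 0 * maxsz = (M 0 + D 0) * maxsz := by ring
        _ = nmax * 4 ^ 0 * maxsz := by rw [hmd]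
        _ = nmax * maxsz := by norm_num
    | succ t ih =>
      have ht' : t < L := by omega
      have ihv := ih ht'
      have hiff : ∀ j < nmax * 4 ^ (t+1),
          (bits t (j/4) = DIVIDED ↔ ¬ bits (t+1) j = NOEXIST) := by
        intro j hj
        have hj4 : j / 4 < nmax * 4 ^ t := by
          have h4m : nmax * 4 ^ (t+1) = 4 * (nmax * 4 ^ t) := by ring
          omega
        have hlt4 : j % 4 < 4 := Nat.mod_lt _ (by norm_num)
        constructor
        · intro hdiv hne
          have hc := ((h1 (t+1) ht j (by simpa using hj)).2.2 hne).2 (by omega)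
          simp only [Nat.add_sub_cancel] at hc
          exact hc hdiv
        · intro hne
          by_contra hdiv
          obtain ⟨hmb, _, hnoex⟩ := h1 t ht' (j/4) hj4
          have hchild : bits (t+1) (4 * (j/4) + j % 4) = NOEXIST := by
            by_cases hnx : bits t (j/4) = NOEXIST
            · exact (hnoex hnx).1 ht (j % 4) hlt4
            · exact (hmb ⟨hdiv, hnx⟩).2 ht (j % 4) hlt4
          rw [Nat.div_add_mod] at hchild
          exact hne hchild
      have hpd : ((Finset.range (nmax * 4 ^ (t+1))).filter
            (fun j => bits t (j/4) = DIVIDED)).card = 4 * D t := by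
        rw [show nmax * 4 ^ (t+1) = 4 * (nmax * 4 ^ t) from by ring,
          quad_count (nmax * 4 ^ t) (fun q => bits t q = DIVIDED)]
      have hcompl := Finset.card_filter_add_card_filter_not
        (s := Finset.range (nmax * 4 ^ (t+1))) (p := fun j => bits t (j/4) = DIVIDED)
      have heq : (Finset.range (nmax * 4 ^ (t+1))).filter
            (fun j => ¬ bits t (j/4) = DIVIDED)
          = (Finset.range (nmax * 4 ^ (t+1))).filter
            (fun j => bits (t+1) j = NOEXIST) := by
        apply Finset.filter_congr
        intro j hj
        simp only [Finset.mem_range] at hj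
        have := hiff j hj
        tauto
      rw [heq, Finset.card_range] at hcompl
      have hpart := block_partition (nmax * 4 ^ (t+1)) (bits (t+1))
      have h4D : M (t+1) + D (t+1) = 4 * D t := by
        simp only [hM, hD] at hpart hpd ⊢
        omega
      have hkey : M (t+1) * s (t+1) + D (t+1) * s (t+1) = D t * s t := by
        rw [hstep t (by omega)]
        calc M (t+1) * s (t+1) + D (t+1) * s (t+1)
            = (M (t+1) + D (t+1)) * s (t+1) := by ring
          _ = 4 * D t * s (t+1) := by rw [h4D]
          _ = D t * (4 * s (t+1)) := by ring
      rw [Finset.sum_range_succ, add_assoc, hkey]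
      exact ihv
  have hDL : D (L-1) = 0 := by
    rw [hD, Finset.card_eq_zero, Finset.filter_eq_empty_iff]
    intro j hj
    exact h3 j (by simpa using hj)
  have hfin := key (L-1) (by omega)
  rw [hDL, Nat.zero_mul, Nat.add_zero, show L - 1 + 1 = L from by omega] at hfin
  simp only [hM, hs] at hfin
  exact hfin
end
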